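/- arXiv:2508.19000 — 3 statements merged into one kernel-verified Lean document; each statement's English description precedes it below -/
import Mathlib

section
/- Let α ∈ C^N and suppose α_i = γ·α_{i+1} for some real γ ≠ 0 and some index i. Then for any real symmetric tridiagonal matrix B and any β ∈ C^N, if Bα = β, there exists a real symmetric matrix B' that is tridiagonal with (i,i+1) and (i+1,i) entries equal to zero (i.e., block-diagonal with blocks of sizes i and N−i) such that B'α = β. -/
/-!
Write `j = i + 1`. Since `α i = γ * α j`, the coupling term `B i j * α j` of row `i` equals
`(B i j / γ) * α i`, and the term `B j i * α i` of row `j` equals `(γ * B j i) * α j`. Moving both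
couplings onto the diagonal kills the entries `(i, j)` and `(j, i)` without changing `B *ᵥ α`;
only entries with both indices in `{i, j}` change, so symmetry and tridiagonality survive.
-/

open Matrix

namespace Matrix

variable {n K : Type*} [DecidableEq n] [Field K]

def decouple (B : Matrix n n K) (i j : n) (γ : K) : Matrix n n K :=
  B + single i i (B i j / γ) + single j j (γ * B j i) - single i j (B i j) - single j i (B j i)

variable {B : Matrix n n K} {i j : n} {γ : K}

theorem decouple_apply_eq_self {k l : n} (h : ¬((k = i ∨ k = j) ∧ (l = i ∨ l = j))) :
    decouple B i j γ k l = B k l := by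
  simp only [decouple, sub_apply, add_apply, single_apply]
  grind

theorem decouple_apply_left_right (hij : i ≠ j) : decouple B i j γ i j = 0 := by
  simp [decouple, hij, hij.symm]

theorem decouple_apply_right_left (hij : i ≠ j) : decouple B i j γ j i = 0 := by
  simp [decouple, hij, hij.symm]

theorem decouple_transpose (hB : Bᵀ = B) : (decouple B i j γ)ᵀ = decouple B i j γ := by
  have hji : B j i = B i j := by rw [← transpose_apply B, hB]
  simp only [decouple, transpose_add, transpose_sub, transpose_single, hB, hji]
  abel

theorem map_decouple {L : Type*} [Field L] (f : K →+* L) :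
    (decouple B i j γ).map f = decouple (B.map f) i j (f γ) := by
  simp [decouple, Matrix.map_add, Matrix.map_sub, map_div₀]

theorem decouple_mulVec [Fintype n] (hγ : γ ≠ 0) (α : n → K) (hα : α i = γ * α j) :
    decouple B i j γ *ᵥ α = B *ᵥ α := by
  have hi : B i j / γ * α i = B i j * α j := by rw [hα]; field_simp
  have hj : γ * B j i * α j = B j i * α i := by rw [hα]; ring
  simp only [decouple, add_mulVec, sub_mulVec, single_mulVec_eq, hi, hj]
  abel

end Matrix

/-- If α_i = γ·α_{i+1} for some real γ ≠ 0, then for any real symmetric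
tridiagonal B with Bα = β there is a real symmetric tridiagonal B' whose (i,i+1) and
(i+1,i) entries vanish (block-diagonal with blocks of sizes i and N−i) with B'α = β. -/
theorem stmt9 (N : ℕ) (α β : Fin N → ℂ) (i : Fin N) (hi : (i : ℕ) + 1 < N)
    (γ : ℝ) (hγ : γ ≠ 0) (hα : α i = (γ : ℂ) * α ⟨(i : ℕ) + 1, hi⟩)
    (B : Matrix (Fin N) (Fin N) ℝ) (hBsym : Bᵀ = B)
    (hBtri : ∀ k l : Fin N, ((k : ℕ) + 1 < (l : ℕ) ∨ (l : ℕ) + 1 < (k : ℕ)) → B k l = 0)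
    (hBα : (B.map Complex.ofReal) *ᵥ α = β) :
    ∃ B' : Matrix (Fin N) (Fin N) ℝ, B'ᵀ = B' ∧
      (∀ k l : Fin N, ((k : ℕ) + 1 < (l : ℕ) ∨ (l : ℕ) + 1 < (k : ℕ)) → B' k l = 0) ∧
      B' i ⟨(i : ℕ) + 1, hi⟩ = 0 ∧ B' ⟨(i : ℕ) + 1, hi⟩ i = 0 ∧
      (B'.map Complex.ofReal) *ᵥ α = β := by
  set j : Fin N := ⟨(i : ℕ) + 1, hi⟩
  have hij : i ≠ j := by simp [Fin.ext_iff, j]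
  refine ⟨decouple B i j γ, decouple_transpose hBsym, fun k l hkl => ?_,
    decouple_apply_left_right hij, decouple_apply_right_left hij, ?_⟩
  · rw [decouple_apply_eq_self, hBtri k l hkl]
    simp only [Fin.ext_iff, j]
    omega
  · rw [← hBα, show Complex.ofReal = ⇑Complex.ofRealHom from rfl, map_decouple]
    exact decouple_mulVec (Complex.ofReal_ne_zero.mpr hγ) α hα
end

section
/- Let h_R, h_T ∈ C^N be nonzero, and suppose that for every index i ∈ {1,...,N−1} there exists a nonzero real γ_i with [ĥ_R + ĥ_T]_i = γ_i·[ĥ_R + ĥ_T]_{i+1}, where ĥ = h/||h||. If additionally there is no γ > 0 with |[h_R]_n| = γ|[h_T]_n| for all n, then no real symmetric tridiagonal matrix B satisfies B·(i·Z_0(ĥ_R + ĥ_T)) = ĥ_T − ĥ_R for any Z_0 > 0. -/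
/-!
The adjacency condition forces all entries of `s = ĥ_R + ĥ_T` onto one real line `ℝ z`.
A real matrix keeps that line invariant, so `ĥ_T - ĥ_R = B (i Z₀ s)` has all entries on
`i ℝ z`. Entrywise, `ĥ_R` and `ĥ_T` are then `(r ∓ iρ) z / 2`, which have equal moduli;
hence `|h_R| = (‖h_R‖ / ‖h_T‖) |h_T|` entrywise.
-/

open Matrix BigOperators

theorem Complex.norm_eq_norm_of_add_eq_smul_of_sub_eq_I_mul_smul {a b z : ℂ} {r ρ : ℝ}
    (hadd : a + b = r • z) (hsub : b - a = I * (ρ • z)) : ‖a‖ = ‖b‖ := by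
  rw [real_smul] at hadd hsub
  have ha : a = (r - I * ρ) / 2 * z := by linear_combination (hadd - hsub) / 2
  have hb : b = (r + I * ρ) / 2 * z := by linear_combination (hadd + hsub) / 2
  have hconj : (r - I * ρ : ℂ) = (starRingEnd ℂ) (r + I * ρ) := by simp [sub_eq_add_neg]
  rw [ha, hb, norm_mul, norm_mul, norm_div, norm_div, hconj, RCLike.norm_conj]

theorem exists_forall_mem_span_singleton_of_adjacent {K V : Type*} [DivisionRing K]
    [AddCommGroup V] [Module K V] {N : ℕ} (s : Fin N → V)
    (h : ∀ (i : Fin N) (hi : (i : ℕ) + 1 < N), ∃ γ : K, γ ≠ 0 ∧ s i = γ • s ⟨i + 1, hi⟩) :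
    ∃ z : V, ∀ n, s n ∈ K ∙ z := by
  rcases Nat.eq_zero_or_pos N with rfl | hN
  · exact ⟨0, fun n => n.elim0⟩
  refine ⟨s ⟨0, hN⟩, fun ⟨k, hk⟩ => ?_⟩
  induction k with
  | zero => exact Submodule.mem_span_singleton_self _
  | succ k ih =>
    obtain ⟨γ, hγ, hs⟩ := h ⟨k, by omega⟩ hk
    have hsucc : s ⟨k + 1, hk⟩ = γ⁻¹ • s ⟨k, by omega⟩ := by
      rw [hs, smul_smul, inv_mul_cancel₀ hγ, one_smul]
    rw [hsucc]
    exact Submodule.smul_mem _ _ (ih _)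

theorem Matrix.map_ofReal_mulVec_mem_span_singleton {m n : Type*} [Fintype n]
    (B : Matrix m n ℝ) {v : n → ℂ} {z : ℂ} (hv : ∀ j, v j ∈ ℝ ∙ z) (i : m) :
    (B.map Complex.ofReal *ᵥ v) i ∈ ℝ ∙ z := by
  simp only [mulVec, dotProduct, map_apply, ← Complex.real_smul]
  exact Submodule.sum_mem _ fun j _ => Submodule.smul_mem _ _ (hv j)

theorem norm_eq_norm_of_map_ofReal_mulVec_eq_sub {n : Type*} [Fintype n] {a b : n → ℂ} {z : ℂ}
    (hline : ∀ j, a j + b j ∈ ℝ ∙ z) (B : Matrix n n ℝ) (c : ℝ)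
    (heq : B.map Complex.ofReal *ᵥ (fun j => Complex.I * c * (a j + b j)) = fun j => b j - a j)
    (j : n) : ‖a j‖ = ‖b j‖ := by
  obtain ⟨r, hr⟩ := Submodule.mem_span_singleton.1 (hline j)
  obtain ⟨ρ, hρ⟩ := Submodule.mem_span_singleton.1
    (B.map_ofReal_mulVec_mem_span_singleton hline j)
  refine Complex.norm_eq_norm_of_add_eq_smul_of_sub_eq_I_mul_smul hr.symm (ρ := c * ρ) ?_
  have hfun : (fun j => Complex.I * c * (a j + b j)) = (Complex.I * c) • fun j => a j + b j := rfl
  rw [← congrFun heq j, hfun, mulVec_smul, Pi.smul_apply, smul_eq_mul, ← hρ, mul_smul,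
    Complex.real_smul, Complex.real_smul]
  ring

theorem sqrt_sum_norm_sq_pos {ι E : Type*} [Fintype ι] [NormedAddCommGroup E] {h : ι → E}
    (h0 : h ≠ 0) : 0 < √(∑ n, ‖h n‖ ^ 2) := by
  obtain ⟨n, hn⟩ := Function.ne_iff.1 h0
  exact Real.sqrt_pos.2 <| Finset.sum_pos' (fun _ _ => by positivity)
    ⟨n, Finset.mem_univ _, pow_pos (norm_pos_iff.2 hn) 2⟩

/-- Adversarial channels for the tridiagonal tree-connected BD-RIS (special
case I = {1,…,N−1} of Theorem 1): if every pair of adjacent entries of ĥ_R + ĥ_T are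
nonzero real multiples of each other, and the entrywise magnitudes of h_R and h_T are not
proportional, then no real symmetric tridiagonal B solves B·(iZ₀(ĥ_R + ĥ_T)) = ĥ_T − ĥ_R
for any Z₀ > 0. -/
theorem stmt15 (N : ℕ) (hR hT : Fin N → ℂ) (hR0 : hR ≠ 0) (hT0 : hT ≠ 0)
    (hadj : ∀ (i : Fin N) (hi : (i : ℕ) + 1 < N), ∃ γ : ℝ, γ ≠ 0 ∧
      (hR i / ((Real.sqrt (∑ n, ‖hR n‖ ^ 2) : ℝ) : ℂ)
          + hT i / ((Real.sqrt (∑ n, ‖hT n‖ ^ 2) : ℝ) : ℂ))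
        = (γ : ℂ) * (hR ⟨(i : ℕ) + 1, hi⟩ / ((Real.sqrt (∑ n, ‖hR n‖ ^ 2) : ℝ) : ℂ)
            + hT ⟨(i : ℕ) + 1, hi⟩ / ((Real.sqrt (∑ n, ‖hT n‖ ^ 2) : ℝ) : ℂ)))
    (hnp : ¬ ∃ γ : ℝ, 0 < γ ∧ ∀ n, ‖hR n‖ = γ * ‖hT n‖) :
    ∀ (Z0 : ℝ), 0 < Z0 → ∀ B : Matrix (Fin N) (Fin N) ℝ, Bᵀ = B →
      (∀ k l : Fin N, ((k : ℕ) + 1 < (l : ℕ) ∨ (l : ℕ) + 1 < (k : ℕ)) → B k l = 0) →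
      ¬ ((B.map Complex.ofReal) *ᵥ (fun n => Complex.I * (Z0 : ℂ)
            * (hR n / ((Real.sqrt (∑ m, ‖hR m‖ ^ 2) : ℝ) : ℂ)
              + hT n / ((Real.sqrt (∑ m, ‖hT m‖ ^ 2) : ℝ) : ℂ)))
          = fun n => hT n / ((Real.sqrt (∑ m, ‖hT m‖ ^ 2) : ℝ) : ℂ)
              - hR n / ((Real.sqrt (∑ m, ‖hR m‖ ^ 2) : ℝ) : ℂ)) := by
  intro Z0 _ B _ _ heq
  set R := √(∑ n, ‖hR n‖ ^ 2)
  set T := √(∑ n, ‖hT n‖ ^ 2)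
  have hRpos : 0 < R := sqrt_sum_norm_sq_pos hR0
  have hTpos : 0 < T := sqrt_sum_norm_sq_pos hT0
  -- `hadj` fits the hypothesis since `(γ : ℂ) * w` and `γ • w` agree definitionally.
  obtain ⟨z, hz⟩ := exists_forall_mem_span_singleton_of_adjacent
    (fun n => hR n / (R : ℂ) + hT n / (T : ℂ)) hadj
  refine hnp ⟨R / T, div_pos hRpos hTpos, fun n => ?_⟩
  have hn := norm_eq_norm_of_map_ofReal_mulVec_eq_sub hz B Z0 heq n
  rw [norm_div, norm_div, Complex.norm_real, Complex.norm_real, Real.norm_of_nonneg hRpos.le,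
    Real.norm_of_nonneg hTpos.le, div_eq_div_iff hRpos.ne' hTpos.ne'] at hn
  field_simp
  linarith
end

section
/- Let Θ = diag(Θ_1,...,Θ_G) be block-diagonal with each Θ_g unitary of size |J_g|, matching a partition J_1,...,J_G of {1,...,N}. Then for nonzero u, v ∈ C^N, |u^H Θ v|^2 = ||u||^2||v||^2 implies there exists γ > 0 with ||u_{J_g}|| = γ||v_{J_g}|| for all g. -/
open Matrix BigOperators

/-- Euclidean norm of the subvector of `u` on the group `{i | g i = k}`. -/
noncomputable def gnorm {N G : ℕ} (g : Fin N → Fin G) (u : Fin N → ℂ) (k : Fin G) : ℝ :=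
  Real.sqrt (∑ i ∈ Finset.univ.filter (fun i => g i = k), ‖u i‖ ^ 2)

/-!
Write `w = Θ v`. Since `Θ` is unitary and maps each block of coordinates to itself, it preserves
the norm of every block: `‖w_{J_g}‖ = ‖v_{J_g}‖`, and in particular `‖w‖ = ‖v‖`. The hypothesis is
then the equality case `|⟨u, w⟩| = ‖u‖ ‖w‖` of Cauchy–Schwarz, so `w = r u` with `r ≠ 0`, whence
`‖v_{J_g}‖ = ‖w_{J_g}‖ = |r| ‖u_{J_g}‖` for every block.
-/

section

variable {𝕜 n : Type*} [RCLike 𝕜] [Fintype n]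

theorem star_dotProduct_self_eq_sum_norm_sq (x : n → 𝕜) :
    star x ⬝ᵥ x = ((∑ i, ‖x i‖ ^ 2 : ℝ) : 𝕜) := by
  simp [dotProduct, RCLike.conj_mul]

theorem Matrix.sum_norm_sq_mulVec_of_conjTranspose_mul_self_eq_one [DecidableEq n]
    {Θ : Matrix n n 𝕜} (hΘ : Θᴴ * Θ = 1) (x : n → 𝕜) :
    ∑ i, ‖(Θ *ᵥ x) i‖ ^ 2 = ∑ i, ‖x i‖ ^ 2 := by
  have h : star (Θ *ᵥ x) ⬝ᵥ (Θ *ᵥ x) = star x ⬝ᵥ x := by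
    rw [star_mulVec, dotProduct_mulVec, vecMul_vecMul, hΘ, vecMul_one]
  rw [star_dotProduct_self_eq_sum_norm_sq, star_dotProduct_self_eq_sum_norm_sq] at h
  exact_mod_cast h

theorem exists_eq_smul_of_norm_star_dotProduct_sq_eq {u w : n → 𝕜} (hu : u ≠ 0) (hw : w ≠ 0)
    (h : ‖star u ⬝ᵥ w‖ ^ 2 = (∑ i, ‖u i‖ ^ 2) * (∑ i, ‖w i‖ ^ 2)) :
    ∃ r : 𝕜, r ≠ 0 ∧ w = r • u := by
  have hCS : ‖inner 𝕜 (WithLp.toLp 2 u) (WithLp.toLp 2 w)‖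
      = ‖WithLp.toLp 2 u‖ * ‖WithLp.toLp 2 w‖ := by
    rw [← pow_left_inj₀ (norm_nonneg _) (by positivity) two_ne_zero, mul_pow,
      EuclideanSpace.norm_sq_eq, EuclideanSpace.norm_sq_eq, EuclideanSpace.inner_toLp_toLp,
      dotProduct_comm]
    exact h
  obtain ⟨r, hr, hwr⟩ := (norm_inner_eq_norm_iff (by simpa) (by simpa)).1 hCS
  exact ⟨r, hr, by simpa using congrArg WithLp.ofLp hwr⟩

end

section

variable {𝕜 n κ : Type*} [RCLike 𝕜] [Fintype n] [DecidableEq κ] {g : n → κ}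

theorem Matrix.mulVec_ite_fiber {Θ : Matrix n n 𝕜} (hblk : ∀ i j, g i ≠ g j → Θ i j = 0)
    (x : n → 𝕜) (k : κ) :
    Θ *ᵥ (fun j => if g j = k then x j else 0) = fun i => if g i = k then (Θ *ᵥ x) i else 0 := by
  ext i
  simp only [mulVec, dotProduct]
  split_ifs with hi
  · refine Finset.sum_congr rfl fun j _ => ?_
    split_ifs with hj
    · rfl
    · rw [hblk i j (hi.trans_ne (Ne.symm hj)), zero_mul, zero_mul]
  · refine Finset.sum_eq_zero fun j _ => ?_
    split_ifs with hj
    · rw [hblk i j (fun hij => hi (hij.trans hj)), zero_mul]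
    · rw [mul_zero]

theorem Matrix.sum_fiber_norm_sq_mulVec [DecidableEq n] {Θ : Matrix n n 𝕜} (hΘ : Θᴴ * Θ = 1)
    (hblk : ∀ i j, g i ≠ g j → Θ i j = 0) (x : n → 𝕜) (k : κ) :
    ∑ i ∈ Finset.univ.filter (fun i => g i = k), ‖(Θ *ᵥ x) i‖ ^ 2
      = ∑ i ∈ Finset.univ.filter (fun i => g i = k), ‖x i‖ ^ 2 := by
  have h := sum_norm_sq_mulVec_of_conjTranspose_mul_self_eq_one hΘ
    (fun j => if g j = k then x j else 0)
  rw [mulVec_ite_fiber hblk] at h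
  simpa [Finset.sum_filter, apply_ite] using h

end

theorem gnorm_mulVec {N G : ℕ} {g : Fin N → Fin G} {Θ : Matrix (Fin N) (Fin N) ℂ}
    (hΘ : Θᴴ * Θ = 1) (hblk : ∀ i j, g i ≠ g j → Θ i j = 0) (v : Fin N → ℂ) (k : Fin G) :
    gnorm g (Θ *ᵥ v) k = gnorm g v k := by
  rw [gnorm, gnorm, sum_fiber_norm_sq_mulVec hΘ hblk]

theorem gnorm_smul {N G : ℕ} (g : Fin N → Fin G) (r : ℂ) (u : Fin N → ℂ) (k : Fin G) :
    gnorm g (r • u) k = ‖r‖ * gnorm g u k := by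
  simp only [gnorm, Pi.smul_apply, smul_eq_mul, norm_mul, mul_pow, ← Finset.mul_sum]
  rw [Real.sqrt_mul (sq_nonneg _), Real.sqrt_sq (norm_nonneg r)]

/-- If Θ is block-diagonal unitary (blocks given by the partition into
fibers of g) and |u^H Θ v|² = ||u||²||v||² with u, v nonzero, then there is γ > 0 with
||u_{J_g}|| = γ||v_{J_g}|| for all g. -/
theorem stmt19 (N G : ℕ) (g : Fin N → Fin G) (u v : Fin N → ℂ) (hu : u ≠ 0) (hv : v ≠ 0)
    (Θ : Matrix (Fin N) (Fin N) ℂ) (hΘ : Θᴴ * Θ = 1)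
    (hblk : ∀ i j, g i ≠ g j → Θ i j = 0)
    (heq : ‖star u ⬝ᵥ (Θ *ᵥ v)‖ ^ 2 = (∑ i, ‖u i‖ ^ 2) * (∑ i, ‖v i‖ ^ 2)) :
    ∃ γ : ℝ, 0 < γ ∧ ∀ k, gnorm g u k = γ * gnorm g v k := by
  have hw : Θ *ᵥ v ≠ 0 := fun h => hv <| by
    simpa [mulVec_mulVec, hΘ] using congrArg (Θᴴ *ᵥ ·) h
  rw [← sum_norm_sq_mulVec_of_conjTranspose_mul_self_eq_one hΘ v] at heq
  obtain ⟨r, hr, hwr⟩ := exists_eq_smul_of_norm_star_dotProduct_sq_eq hu hw heq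
  refine ⟨‖r‖⁻¹, inv_pos.2 (norm_pos_iff.2 hr), fun k => ?_⟩
  rw [← gnorm_mulVec hΘ hblk v k, hwr, gnorm_smul, inv_mul_cancel_left₀ (norm_ne_zero_iff.2 hr)]
end
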